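/- arXiv:2007.02324 — 3 statements merged into one kernel-verified Lean document; each statement's English description precedes it below -/
import Mathlib

section
/- Let A be a *-algebra (e.g. bounded operators on a Hilbert space) and let p, q, e be nonzero self-adjoint idempotents (projections) in A, and let α, β, γ > 0 be real scalars. Then α·p + β·q = γ·e holds if and only if either (1) p = q = e and α + β = γ, or (2) p·q = 0, p + q = e, and α = β = γ. -/
/-- In a (unital) C⋆-algebra (e.g. the bounded operators on a Hilbert
space), for nonzero projections `p, q, e` and positive real scalars `α, β, γ`, the identity
`α • p + β • q = γ • e` holds iff either `p = q = e` and `α + β = γ`, or `p` and `q` are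
orthogonal with `p + q = e` and `α = β = γ`. -/
theorem projection_scalar_sum_eq_iff
    {A : Type*} [CStarAlgebra A]
    (p q e : A) (hp : p ≠ 0) (hq : q ≠ 0) (he : e ≠ 0)
    (hpsa : star p = p) (hpidem : p * p = p)
    (hqsa : star q = q) (hqidem : q * q = q)
    (hesa : star e = e) (heidem : e * e = e)
    (α β γ : ℝ) (hα : 0 < α) (hβ : 0 < β) (hγ : 0 < γ) :
    α • p + β • q = γ • e ↔
      ((p = q ∧ q = e ∧ α + β = γ) ∨
        (p * q = 0 ∧ p + q = e ∧ α = β ∧ β = γ)) := by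
  constructor
  · intro h
    -- the squared equation
    have E : (α*β) • (p*q) + (α*β) • (q*p)
        = (α*(γ-α)) • p + (β*(γ-β)) • q := by
      have h2 : (α • p + β • q) * (α • p + β • q) = γ • (α • p + β • q) := by
        rw [h, smul_mul_smul_comm, heidem, smul_smul]
      rw [add_mul, mul_add, mul_add, smul_mul_smul_comm, smul_mul_smul_comm,
        smul_mul_smul_comm, smul_mul_smul_comm, hpidem, hqidem] at h2
      linear_combination (norm := module) h2
    by_cases hcase : γ = α + β
    · -- the equal case
      left
      have hαβ : (α*β) ≠ 0 := by positivity
      have hsum : p*q + q*p = p + q := by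
        apply smul_right_injective A hαβ
        show (α*β) • (p*q + q*p) = (α*β) • (p + q)
        rw [smul_add, smul_add, E, hcase]
        module
      have h4 : p * (p*q + q*p) * p = p * (p + q) * p := by rw [hsum]
      have lhs4 : p * (p*q + q*p) * p = p*q*p + p*q*p := by
        rw [mul_add, add_mul]
        congr 1
        · rw [← mul_assoc p p q, hpidem]
        · rw [← mul_assoc p q p, mul_assoc (p*q) p p, hpidem]
      have rhs4 : p * (p + q) * p = p + p*q*p := by
        rw [mul_add, add_mul, hpidem, hpidem]
      have hpqp : p*q*p = p := by
        rw [lhs4, rhs4] at h4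
        exact add_right_cancel h4
      have h5 : q * (p*q + q*p) * q = q * (p + q) * q := by rw [hsum]
      have lhs5 : q * (p*q + q*p) * q = q*p*q + q*p*q := by
        rw [mul_add, add_mul]
        congr 1
        · rw [← mul_assoc q p q, mul_assoc (q*p) q q, hqidem]
        · rw [← mul_assoc q q p, hqidem]
      have rhs5 : q * (p + q) * q = q*p*q + q := by
        rw [mul_add, add_mul, hqidem, hqidem]
      have hqpq : q*p*q = q := by
        rw [lhs5, rhs5] at h5
        exact add_left_cancel h5
      have hpq : p * q = p := by
        rw [← sub_eq_zero, ← CStarRing.mul_star_self_eq_zero_iff]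
        have hst : star (p*q - p) = q*p - p := by
          rw [star_sub, star_mul, hpsa, hqsa]
        rw [hst]
        have expand : (p*q - p) * (q*p - p)
            = p*q*q*p - p*q*p - p*q*p + p*p := by noncomm_ring
        rw [expand, mul_assoc p q q, hqidem, hpqp, hpidem]
        abel
      have hqp : q * p = q := by
        rw [← sub_eq_zero, ← CStarRing.mul_star_self_eq_zero_iff]
        have hst : star (q*p - q) = p*q - q := by
          rw [star_sub, star_mul, hpsa, hqsa]
        rw [hst]
        have expand : (q*p - q) * (p*q - q)
            = q*p*p*q - q*p*q - q*p*q + q*q := by noncomm_ring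
        rw [expand, mul_assoc q p p, hpidem, hqpq, hqidem]
        abel
      have hpeqq : p = q := by
        have h6 := congrArg star hpq
        rw [star_mul, hpsa, hqsa, hqp] at h6
        exact h6.symm
      subst hpeqq
      refine ⟨rfl, ?_, hcase.symm⟩
      apply smul_right_injective A (ne_of_gt hγ)
      show γ • p = γ • e
      rw [← h, hcase]
      module
    · -- the orthogonal case
      right
      have h4 : (α*β)•(p*q*p) + (α*β)•(q*p)
          = (α*(γ-α))•p + (β*(γ-β))•(q*p) := by
        calc (α*β)•(p*q*p) + (α*β)•(q*p)
            = ((α*β)•(p*q) + (α*β)•(q*p)) * p := by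
              rw [add_mul, smul_mul_assoc, smul_mul_assoc, mul_assoc q p p, hpidem]
          _ = ((α*(γ-α))•p + (β*(γ-β))•q) * p := by rw [E]
          _ = (α*(γ-α))•p + (β*(γ-β))•(q*p) := by
              rw [add_mul, smul_mul_assoc, smul_mul_assoc, hpidem]
      have h5 : (α*β)•(p*q) + (α*β)•(p*q*p)
          = (α*(γ-α))•p + (β*(γ-β))•(p*q) := by
        calc (α*β)•(p*q) + (α*β)•(p*q*p)
            = p * ((α*β)•(p*q) + (α*β)•(q*p)) := by
              rw [mul_add, mul_smul_comm, mul_smul_comm, ← mul_assoc p p q, hpidem,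
                ← mul_assoc p q p]
          _ = p * ((α*(γ-α))•p + (β*(γ-β))•q) := by rw [E]
          _ = (α*(γ-α))•p + (β*(γ-β))•(p*q) := by
              rw [mul_add, mul_smul_comm, mul_smul_comm, hpidem]
      have hcoef : α*β - β*(γ-β) ≠ 0 := by
        have hrw : α*β - β*(γ-β) = β*(α+β-γ) := by ring
        rw [hrw]
        intro hc
        rcases mul_eq_zero.mp hc with h' | h'
        · exact (ne_of_gt hβ) h'
        · exact hcase (by linarith)
      have hcomm : p * q = q * p := by
        have h6 : (α*β - β*(γ-β)) • (p*q - q*p) = 0 := by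
          linear_combination (norm := module) h5 - h4
        rcases smul_eq_zero.mp h6 with h' | h'
        · exact absurd h' hcoef
        · exact sub_eq_zero.mp h'
      have hr : (p*q)*(p*q) = p*q := by
        rw [← mul_assoc, mul_assoc p q p, ← hcomm, ← mul_assoc p p q, hpidem,
          mul_assoc p q q, hqidem]
      have hpr : p*(p*q) = p*q := by rw [← mul_assoc, hpidem]
      have hqr : q*(p*q) = p*q := by rw [← mul_assoc, ← hcomm, mul_assoc, hqidem]
      have h8 : (α*β)•(p*q) + (α*β)•(p*q)
          = (α*(γ-α))•(p*q) + (β*(γ-β))•(p*q) := by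
        calc (α*β)•(p*q) + (α*β)•(p*q)
            = ((α*β)•(p*q) + (α*β)•(q*p)) * (p*q) := by
              rw [add_mul, smul_mul_assoc, smul_mul_assoc, ← hcomm, hr]
          _ = ((α*(γ-α))•p + (β*(γ-β))•q) * (p*q) := by rw [E]
          _ = (α*(γ-α))•(p*q) + (β*(γ-β))•(p*q) := by
              rw [add_mul, smul_mul_assoc, smul_mul_assoc, hpr, hqr]
      have h9 : ((α+β)*(α+β-γ)) • (p * q) = 0 := by
        linear_combination (norm := module) h8
      have hpq0 : p * q = 0 := by
        have hcoef2 : (α+β)*(α+β-γ) ≠ 0 := by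
          intro hc
          rcases mul_eq_zero.mp hc with h' | h'
          · linarith
          · exact hcase (by linarith)
        rcases smul_eq_zero.mp h9 with h' | h'
        · exact absurd h' hcoef2
        · exact h'
      have hqp0 : q * p = 0 := by rw [← hcomm, hpq0]
      rw [hpq0, hqp0, smul_zero, add_zero] at E
      have h10 : (0:A) = (α*(γ-α)) • p := by
        calc (0:A) = p * (0:A) := (mul_zero p).symm
          _ = p * ((α*(γ-α))•p + (β*(γ-β))•q) := by rw [← E]
          _ = (α*(γ-α))•p := by
              rw [mul_add, mul_smul_comm, mul_smul_comm, hpidem, hpq0, smul_zero, add_zero]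
      have hγα : γ = α := by
        rcases smul_eq_zero.mp h10.symm with h' | h'
        · rcases mul_eq_zero.mp h' with h'' | h''
          · linarith
          · linarith [sub_eq_zero.mp (by linarith [h''] : γ - α = 0)]
        · exact absurd h' hp
      have h11 : (0:A) = (β*(γ-β)) • q := by
        calc (0:A) = (0:A) * q := (zero_mul q).symm
          _ = ((α*(γ-α))•p + (β*(γ-β))•q) * q := by rw [← E]
          _ = (β*(γ-β))•q := by
              rw [add_mul, smul_mul_assoc, smul_mul_assoc, hqidem, hpq0, smul_zero, zero_add]
      have hγβ : γ = β := by
        rcases smul_eq_zero.mp h11.symm with h' | h'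
        · rcases mul_eq_zero.mp h' with h'' | h''
          · linarith
          · linarith [h'']
        · exact absurd h' hq
      have hab : α = β := hγα.symm.trans hγβ
      refine ⟨hpq0, ?_, hab, hγβ.symm⟩
      apply smul_right_injective A (ne_of_gt hγ)
      show γ • (p + q) = γ • e
      rw [← h, smul_add, hγα, hab]
  · rintro (⟨rfl, rfl, rfl⟩ | ⟨-, rfl, rfl, rfl⟩)
    · module
    · module
end

section
/- Let (Ω, μ) be a σ-finite measure space and let f be a measurable function in L¹+L^∞(μ). Then ‖f‖_{1+∞} = ∫₀¹ f*(t) dt, where f* is the decreasing rearrangement of f. -/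
/-!
Write `d_f(s) = μ(|f| > s)`. Since `f*(t) ≤ s ↔ d_f(s) ≤ t`, the layer-cake formula turns
`∫₀¹ f*` into `∫₀^∞ min(d_f(s), 1) ds`. If `f = g + h` with `|h| ≤ M` a.e., then
`d_f(s + M) ≤ d_g(s)`, so this integral is at most `M + ∫₀^∞ d_g = ‖h‖_∞ + ‖g‖₁`. Conversely,
for `c = f*(1)` one has `d_f ≥ 1` on `(0, c)` and `d_f ≤ 1` on `(c, ∞)`, so clipping `f` at `±c`
gives `f = g + h` with `‖h‖_∞ ≤ c` and `‖g‖₁ ≤ ∫_c^∞ d_f`, and `c + ∫_c^∞ d_f` is the integral.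
-/

open MeasureTheory ENNReal

/-- The decreasing rearrangement `f*` of a measurable function `f`:
`f*(t) = inf { s ≥ 0 : μ(|f| > s) ≤ t }`. -/
noncomputable def decRearrange {Ω : Type*} [MeasurableSpace Ω]
    (μ : Measure Ω) (f : Ω → ℝ) (t : ℝ) : ℝ :=
  sInf {s : ℝ | 0 ≤ s ∧ μ {x | s < |f x|} ≤ ENNReal.ofReal t}

open Set

def clip (c x : ℝ) : ℝ := max (-c) (min c x)

lemma measurable_clip (c : ℝ) : Measurable (clip c) := by
  unfold clip; fun_prop

lemma abs_clip_le {c : ℝ} (hc : 0 ≤ c) (x : ℝ) : |clip c x| ≤ c :=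
  abs_le.2 ⟨le_max_left _ _, max_le (by linarith) (min_le_left _ _)⟩

lemma abs_sub_clip_le (c x : ℝ) : |x - clip c x| ≤ max (|x| - c) 0 := by
  unfold clip
  grind [abs_le]

lemma setLIntegral_Ioi_comp_add (F : ℝ → ℝ≥0∞) (c : ℝ) :
    ∫⁻ s in Ioi 0, F (s + c) = ∫⁻ s in Ioi c, F s := by
  rw [(measurePreserving_add_right volume c).setLIntegral_comp_emb
    (measurableEmbedding_addRight c)]
  simp

lemma setLIntegral_Ioi_eq_Ioc_add_Ioi (F : ℝ → ℝ≥0∞) {c : ℝ} (hc : 0 ≤ c) :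
    ∫⁻ s in Ioi 0, F s = (∫⁻ s in Ioc 0 c, F s) + ∫⁻ s in Ioi c, F s := by
  rw [← lintegral_union measurableSet_Ioi Ioc_disjoint_Ioi_same, Ioc_union_Ioi_eq_Ioi hc]

section Distribution

variable {Ω : Type*} [MeasurableSpace Ω] {μ : Measure Ω} {f : Ω → ℝ}

variable (μ) in
noncomputable def distribution (f : Ω → ℝ) (s : ℝ) : ℝ≥0∞ := μ {x | s < |f x|}

lemma distribution_antitone (f : Ω → ℝ) : Antitone (distribution μ f) :=
  fun _ _ hst => measure_mono fun _ hx => hst.trans_lt hx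

lemma lintegral_distribution (hf : AEMeasurable f μ) :
    ∫⁻ s in Ioi 0, distribution μ f s = eLpNorm f 1 μ := by
  rw [eLpNorm_one_eq_lintegral_enorm, lintegral_congr fun x => Real.enorm_eq_ofReal_abs (f x),
    lintegral_eq_lintegral_meas_lt μ (ae_of_all _ fun x => abs_nonneg (f x)) hf.abs]
  rfl

lemma distribution_add_le_of_ae_abs_le {g : Ω → ℝ} {M : ℝ}
    (hfg : ∀ᵐ x ∂μ, |f x| ≤ |g x| + M) (s : ℝ) :
    distribution μ f (s + M) ≤ distribution μ g s :=
  measure_mono_ae <| hfg.mono fun x hx (hfx : s + M < |f x|) => show s < |g x| by linarith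

lemma distribution_csInf_le {S : Set ℝ} (hne : S.Nonempty) (hbdd : BddBelow S) {t : ℝ≥0∞}
    (hS : ∀ s ∈ S, distribution μ f s ≤ t) : distribution μ f (sInf S) ≤ t := by
  obtain ⟨u, hu_anti, hu_tend, hu_mem⟩ := exists_seq_tendsto_sInf hne hbdd
  have hunion : {x | sInf S < |f x|} = ⋃ n, {x | u n < |f x|} := by
    ext x
    simp only [mem_iUnion]
    exact ⟨fun hx => (hu_tend.eventually_lt_const hx).exists,
      fun ⟨n, hn⟩ => (csInf_le hbdd (hu_mem n)).trans_lt hn⟩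
  have hmono : Monotone fun n => {x | u n < |f x|} := fun _ _ hmn _ hx => (hu_anti hmn).trans_lt hx
  rw [distribution, hunion, hmono.measure_iUnion]
  exact iSup_le fun n => hS _ (hu_mem n)

lemma lintegral_min_distribution_add_le {g h : Ω → ℝ} (hg : Integrable g μ)
    (hh : MemLp h ⊤ μ) :
    ∫⁻ s in Ioi 0, min (distribution μ (g + h) s) 1 ≤ eLpNorm g 1 μ + eLpNorm h ⊤ μ := by
  set M := lpNorm h ⊤ μ
  have hbound : ∀ᵐ x ∂μ, |(g + h) x| ≤ |g x| + M := by
    filter_upwards [ae_le_lpNorm_exponent_top hh] with x hx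
    exact (abs_add_le _ _).trans (by rw [← Real.norm_eq_abs (h x)]; linarith)
  rw [setLIntegral_Ioi_eq_Ioc_add_Ioi _ (lpNorm_nonneg : 0 ≤ M), ← ofReal_lpNorm hh, add_comm]
  gcongr
  · calc ∫⁻ s in Ioi M, min (distribution μ (g + h) s) 1
        ≤ ∫⁻ s in Ioi M, distribution μ (g + h) s := lintegral_mono fun _ => min_le_left _ _
      _ = ∫⁻ s in Ioi 0, distribution μ (g + h) (s + M) := (setLIntegral_Ioi_comp_add _ M).symm
      _ ≤ ∫⁻ s in Ioi 0, distribution μ g s :=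
        lintegral_mono fun s => distribution_add_le_of_ae_abs_le hbound s
      _ = eLpNorm g 1 μ := lintegral_distribution hg.aemeasurable
  · calc ∫⁻ s in Ioc 0 M, min (distribution μ (g + h) s) 1
        ≤ ∫⁻ s in Ioc 0 M, 1 := lintegral_mono fun _ => min_le_right _ _
      _ = ENNReal.ofReal M := by simp

lemma decRearrange_nonneg (μ : Measure Ω) (f : Ω → ℝ) (t : ℝ) : 0 ≤ decRearrange μ f t :=
  Real.sInf_nonneg fun _ hs => hs.1

lemma distribution_decRearrange_le {t : ℝ}
    (hne : ∃ s, 0 ≤ s ∧ distribution μ f s ≤ ENNReal.ofReal t) :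
    distribution μ f (decRearrange μ f t) ≤ ENNReal.ofReal t :=
  distribution_csInf_le hne ⟨0, fun _ hs => hs.1⟩ fun _ hs => hs.2

lemma decRearrange_le_iff {t s : ℝ} (hne : ∃ s, 0 ≤ s ∧ distribution μ f s ≤ ENNReal.ofReal t)
    (hs : 0 ≤ s) : decRearrange μ f t ≤ s ↔ distribution μ f s ≤ ENNReal.ofReal t :=
  ⟨fun h => (distribution_antitone f h).trans (distribution_decRearrange_le hne),
    fun h => csInf_le ⟨0, fun _ hs => hs.1⟩ ⟨hs, h⟩⟩

lemma exists_distribution_le (hI : ∫⁻ s in Ioi 0, min (distribution μ f s) 1 ≠ ∞)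
    {t : ℝ≥0∞} (ht : 0 < t) : ∃ s, 0 ≤ s ∧ distribution μ f s ≤ t := by
  by_contra! hlt
  refine hI (eq_top_iff.2 ?_)
  calc ∞ = ∫⁻ _ in Ioi (0 : ℝ), min t 1 := by simp [ht.ne']
    _ ≤ ∫⁻ s in Ioi 0, min (distribution μ f s) 1 :=
      setLIntegral_mono' measurableSet_Ioi fun s hs => min_le_min_right 1 (hlt s hs.le).le

lemma volume_decRearrange_gt (hI : ∫⁻ s in Ioi 0, min (distribution μ f s) 1 ≠ ∞)
    {s : ℝ} (hs : 0 ≤ s) :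
    volume ({t | s < decRearrange μ f t} ∩ Ioc 0 1) = min (distribution μ f s) 1 := by
  set m := min (distribution μ f s) 1
  have hm : m ≠ ∞ := ((min_le_right _ _).trans_lt one_lt_top).ne
  have hm1 : m.toReal ≤ 1 := toReal_le_of_le_ofReal zero_le_one (by simp [m])
  have hiff : ∀ t ∈ Ioc (0 : ℝ) 1,
      s < decRearrange μ f t ↔ ENNReal.ofReal t < distribution μ f s := fun t ht => by
    rw [← not_le, decRearrange_le_iff (exists_distribution_le hI (ofReal_pos.2 ht.1)) hs, not_le]
  have hsub : Ioo 0 m.toReal ⊆ {t | s < decRearrange μ f t} ∩ Ioc 0 1 := fun t ⟨ht0, htm⟩ =>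
    have ht1 : t ∈ Ioc (0 : ℝ) 1 := ⟨ht0, htm.le.trans hm1⟩
    ⟨(hiff t ht1).2 (((ofReal_lt_iff_lt_toReal ht0.le hm).2 htm).trans_le (min_le_left _ _)), ht1⟩
  have hsup : {t | s < decRearrange μ f t} ∩ Ioc 0 1 ⊆ Ioc 0 m.toReal := fun t ⟨hst, ht⟩ =>
    ⟨ht.1, (ofReal_le_iff_le_toReal hm).1 (le_min ((hiff t ht).1 hst).le (ofReal_le_one.2 ht.2))⟩
  apply le_antisymm
  · simpa [hm] using measure_mono (μ := volume) hsup
  · simpa [hm] using measure_mono (μ := volume) hsub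

theorem lintegral_decRearrange_eq (hI : ∫⁻ s in Ioi 0, min (distribution μ f s) 1 ≠ ∞) :
    ∫⁻ t in Ioc 0 1, ENNReal.ofReal (decRearrange μ f t) =
      ∫⁻ s in Ioi 0, min (distribution μ f s) 1 := by
  have hanti : AntitoneOn (decRearrange μ f) (Ioc 0 1) := fun t ht _ _ htt' =>
    csInf_le_csInf ⟨0, fun _ hs => hs.1⟩ (exists_distribution_le hI (ofReal_pos.2 ht.1))
      fun _ hs => ⟨hs.1, hs.2.trans (ofReal_le_ofReal htt')⟩
  rw [lintegral_eq_lintegral_meas_lt _ (ae_of_all _ (decRearrange_nonneg μ f))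
    (aemeasurable_restrict_of_antitoneOn measurableSet_Ioc hanti)]
  refine setLIntegral_congr_fun measurableSet_Ioi fun s hs => ?_
  rw [Measure.restrict_apply' measurableSet_Ioc]
  exact volume_decRearrange_gt hI (le_of_lt hs)

lemma distribution_sub_clip_le (f : Ω → ℝ) {c s : ℝ} (hs : 0 ≤ s) :
    distribution μ (f - clip c ∘ f) s ≤ distribution μ f (s + c) :=
  measure_mono fun x (hx : s < |f x - clip c (f x)|) => show s + c < |f x| by
    rcases lt_max_iff.1 (hx.trans_le (abs_sub_clip_le c (f x))) with h | h <;> linarith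

lemma eLpNorm_sub_clip_le (hf : AEMeasurable f μ) (c : ℝ) :
    eLpNorm (f - clip c ∘ f) 1 μ ≤ ∫⁻ s in Ioi c, distribution μ f s := by
  rw [← lintegral_distribution (hf.sub ((measurable_clip c).comp_aemeasurable hf)),
    ← setLIntegral_Ioi_comp_add (distribution μ f) c]
  exact setLIntegral_mono' measurableSet_Ioi fun s hs => distribution_sub_clip_le f hs.le

lemma memLp_top_clip_comp (hf : AEMeasurable f μ) {c : ℝ} (hc : 0 ≤ c) :
    MemLp (clip c ∘ f) ⊤ μ :=
  memLp_top_of_bound ((measurable_clip c).comp_aemeasurable hf).aestronglyMeasurable c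
    (ae_of_all _ fun x => abs_clip_le hc (f x))

lemma eLpNorm_top_clip_comp_le (f : Ω → ℝ) {c : ℝ} (hc : 0 ≤ c) :
    eLpNorm (clip c ∘ f) ⊤ μ ≤ ENNReal.ofReal c := by
  rw [eLpNorm_exponent_top]
  exact eLpNormEssSup_le_of_ae_bound (ae_of_all _ fun x => abs_clip_le hc (f x))

lemma exists_integrable_add_memLp_top_le (hf : AEMeasurable f μ)
    (hI : ∫⁻ s in Ioi 0, min (distribution μ f s) 1 ≠ ∞) :
    ∃ g h : Ω → ℝ, f = g + h ∧ Integrable g μ ∧ MemLp h ⊤ μ ∧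
      eLpNorm g 1 μ + eLpNorm h ⊤ μ ≤ ∫⁻ s in Ioi 0, min (distribution μ f s) 1 := by
  set c := decRearrange μ f 1
  have hc : 0 ≤ c := decRearrange_nonneg μ f 1
  have hne := exists_distribution_le hI (t := ENNReal.ofReal 1) (by simp)
  have hlow : ∀ s ∈ Ioo 0 c, min (distribution μ f s) 1 = 1 := fun s hs =>
    min_eq_right <| le_of_lt <| not_le.1 fun h =>
      hs.2.not_ge ((decRearrange_le_iff hne hs.1.le).2 (by simpa using h))
  have hhigh : ∀ s ∈ Ioi c, min (distribution μ f s) 1 = distribution μ f s := fun s hs =>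
    min_eq_left <| (distribution_antitone f hs.le).trans <| by
      simpa using distribution_decRearrange_le hne
  have hsplit : ∫⁻ s in Ioi 0, min (distribution μ f s) 1
      = ENNReal.ofReal c + ∫⁻ s in Ioi c, distribution μ f s := by
    rw [setLIntegral_Ioi_eq_Ioc_add_Ioi _ hc, ← Measure.restrict_congr_set Ioo_ae_eq_Ioc,
      setLIntegral_congr_fun measurableSet_Ioo hlow, setLIntegral_congr_fun measurableSet_Ioi hhigh,
      setLIntegral_one, Real.volume_Ioo, sub_zero]
  have hg := eLpNorm_sub_clip_le hf c
  have hh := memLp_top_clip_comp hf hc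
  have hg_int : Integrable (f - clip c ∘ f) μ := memLp_one_iff_integrable.1
    ⟨hf.aestronglyMeasurable.sub hh.1,
      hg.trans_lt ((le_add_self.trans_eq hsplit.symm).trans_lt hI.lt_top)⟩
  refine ⟨_, _, (sub_add_cancel f _).symm, hg_int, hh, ?_⟩
  rw [hsplit, add_comm (ENNReal.ofReal c)]
  exact add_le_add hg (eLpNorm_top_clip_comp_le f hc)

end Distribution

theorem L1_plus_Linfty_norm_eq_integral_rearrangement_general
    {Ω : Type*} [MeasurableSpace Ω] (μ : Measure Ω)
    (f : Ω → ℝ)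
    (hdecomp : ∃ g h : Ω → ℝ, f = g + h ∧ Integrable g μ ∧ MemLp h ⊤ μ) :
    sInf {r : ℝ≥0∞ | ∃ g h : Ω → ℝ, f = g + h ∧ Integrable g μ ∧ MemLp h ⊤ μ ∧
        r = eLpNorm g 1 μ + eLpNorm h ⊤ μ} =
      ∫⁻ t in Set.Ioc (0:ℝ) 1, ENNReal.ofReal (decRearrange μ f t) := by
  obtain ⟨g, h, rfl, hg, hh⟩ := hdecomp
  have hI : ∫⁻ s in Ioi 0, min (distribution μ (g + h) s) 1 ≠ ∞ :=
    ((lintegral_min_distribution_add_le hg hh).trans_lt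
      (add_lt_top.2 ⟨(memLp_one_iff_integrable.2 hg).2, hh.2⟩)).ne
  rw [lintegral_decRearrange_eq hI]
  refine le_antisymm ?_ (le_sInf ?_)
  · obtain ⟨g₀, h₀, hgh₀, hg₀, hh₀, hle⟩ := exists_integrable_add_memLp_top_le
      (hg.aemeasurable.add hh.aestronglyMeasurable.aemeasurable) hI
    exact sInf_le_of_le ⟨g₀, h₀, hgh₀, hg₀, hh₀, rfl⟩ hle
  · rintro r ⟨g', h', hgh', hg', hh', rfl⟩
    exact hgh' ▸ lintegral_min_distribution_add_le hg' hh'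

/-- For a σ-finite measure `μ` and `f ∈ L¹ + L^∞(μ)`,
`‖f‖_{1+∞} = inf { ‖g‖₁ + ‖h‖_∞ : f = g + h } = ∫₀¹ f*(t) dt`, where `f*` is the
decreasing rearrangement of `f`. -/
theorem L1_plus_Linfty_norm_eq_integral_rearrangement
    {Ω : Type*} [MeasurableSpace Ω] (μ : Measure Ω) [SigmaFinite μ]
    (f : Ω → ℝ) (hmeas : Measurable f)
    (hdecomp : ∃ g h : Ω → ℝ, f = g + h ∧ Integrable g μ ∧ MemLp h ⊤ μ) :
    sInf {r : ℝ≥0∞ | ∃ g h : Ω → ℝ, f = g + h ∧ Integrable g μ ∧ MemLp h ⊤ μ ∧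
        r = eLpNorm g 1 μ + eLpNorm h ⊤ μ} =
      ∫⁻ t in Set.Ioc (0:ℝ) 1, ENNReal.ofReal (decRearrange μ f t) :=
  L1_plus_Linfty_norm_eq_integral_rearrangement_general μ f hdecomp
end

section
/- Let (Ω, μ) be a measure space with μ(Ω) > 1, and let ‖v‖_{1∩∞} := max{‖v‖₁, ‖v‖_∞}. If μ is non-atomic, A ⊆ Ω has μ(A) = min{1, μ(Ω)}, and v is a measurable function with |v| = 𝟙_A a.e., then ‖v‖_{1∩∞} = 1 and v is an extreme point of the closed unit ball of L¹∩L^∞(μ). -/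
open MeasureTheory ENNReal

lemma midpoint_key {g h : ℂ} (hg : ‖g‖ ≤ 1) (hh : ‖h‖ ≤ 1)
    (hs : ‖g + h‖ = 2) : g = h := by
  have hg2 : g.re ^ 2 + g.im ^ 2 ≤ 1 := by
    have := Complex.sq_norm g
    rw [Complex.normSq_apply] at this
    nlinarith [norm_nonneg g]
  have hh2 : h.re ^ 2 + h.im ^ 2 ≤ 1 := by
    have := Complex.sq_norm h
    rw [Complex.normSq_apply] at this
    nlinarith [norm_nonneg h]
  have hs2 : (g.re + h.re) ^ 2 + (g.im + h.im) ^ 2 = 4 := by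
    have := Complex.sq_norm (g + h)
    rw [Complex.normSq_apply] at this
    simp only [Complex.add_re, Complex.add_im, hs] at this
    nlinarith
  apply Complex.ext
  · nlinarith [sq_nonneg (g.re - h.re), sq_nonneg (g.im - h.im)]
  · nlinarith [sq_nonneg (g.re - h.re), sq_nonneg (g.im - h.im)]

/-- Let `μ` be a non-atomic measure with `μ(Ω) > 1`, and let `v` be a
unimodular function supported on a measurable set `A` with `μ(A) = min{1, μ(Ω)}`
(i.e. `|v| = 𝟙_A` a.e.). Then `‖v‖_{1∩∞} := max{‖v‖₁, ‖v‖_∞} = 1` and `v` is an extreme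
point of the closed unit ball of `L¹ ∩ L^∞(μ)`: any midpoint decomposition of `v` into
two elements of the unit ball is trivial. -/
theorem unimodular_extreme_point_L1_inter_Linfty
    {Ω : Type*} [MeasurableSpace Ω] (μ : Measure Ω)
    (hnonatomic : ∀ s : Set Ω, MeasurableSet s → 0 < μ s →
      ∃ t ⊆ s, MeasurableSet t ∧ 0 < μ t ∧ μ t < μ s)
    (hμ : 1 < μ Set.univ)
    (A : Set Ω) (hA : MeasurableSet A) (hAmeas : μ A = min 1 (μ Set.univ))
    (v : Ω → ℂ) (hv : AEStronglyMeasurable v μ)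
    (hvA : ∀ᵐ ω ∂μ, ‖v ω‖ = A.indicator (fun _ => (1:ℝ)) ω) :
    max (eLpNorm v 1 μ) (eLpNorm v ⊤ μ) = 1 ∧
      ∀ g h : Ω → ℂ, AEStronglyMeasurable g μ → AEStronglyMeasurable h μ →
        max (eLpNorm g 1 μ) (eLpNorm g ⊤ μ) ≤ 1 →
        max (eLpNorm h 1 μ) (eLpNorm h ⊤ μ) ≤ 1 →
        (v =ᵐ[μ] fun ω => (g ω + h ω) / 2) → g =ᵐ[μ] h := by
  have hA1 : μ A = 1 := by rw [hAmeas]; exact min_eq_left hμ.le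
  -- pointwise ennnorm of v is the indicator
  have hvnorm : ∀ᵐ ω ∂μ, (‖v ω‖₊ : ℝ≥0∞) = A.indicator (fun _ => (1 : ℝ≥0∞)) ω := by
    filter_upwards [hvA] with ω hω
    have : (‖v ω‖₊ : ℝ≥0∞) = ENNReal.ofReal ‖v ω‖ := by
      rw [ofReal_norm]; rfl
    rw [this, hω]
    by_cases hmem : ω ∈ A <;> simp [Set.indicator, hmem]
  have hv1 : eLpNorm v 1 μ = 1 := by
    rw [eLpNorm_one_eq_lintegral_enorm]; simp only [enorm_eq_nnnorm]
    rw [lintegral_congr_ae hvnorm,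
      lintegral_indicator hA]
    simp [hA1]
  have hvbound : ∀ᵐ ω ∂μ, ‖v ω‖ ≤ 1 := by
    filter_upwards [hvA] with ω hω
    have : ‖v ω‖ = ‖v ω‖ := rfl
    rw [this, hω]
    by_cases hmem : ω ∈ A <;> simp [Set.indicator, hmem]
  have hvtop : eLpNorm v ⊤ μ ≤ 1 := by
    rw [eLpNorm_exponent_top]
    simpa using eLpNormEssSup_le_of_ae_bound (C := 1) hvbound
  constructor
  · rw [hv1]; exact max_eq_left hvtop
  · intro g h hg hh hgle hhle heq
    -- a.e. bounds on g and h
    have hgtop : eLpNorm g ⊤ μ ≤ 1 := le_trans (le_max_right _ _) hgle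
    have hhtop : eLpNorm h ⊤ μ ≤ 1 := le_trans (le_max_right _ _) hhle
    have hg1 : eLpNorm g 1 μ ≤ 1 := le_trans (le_max_left _ _) hgle
    have hh1 : eLpNorm h 1 μ ≤ 1 := le_trans (le_max_left _ _) hhle
    have hgb : ∀ᵐ ω ∂μ, ‖g ω‖ ≤ 1 := by
      have := ae_le_eLpNormEssSup (f := g) (μ := μ)
      rw [eLpNorm_exponent_top] at hgtop
      filter_upwards [this] with ω hω
      have h2 : (‖g ω‖₊ : ℝ≥0∞) ≤ 1 := le_trans hω hgtop
      have h3 : ‖g ω‖ ≤ 1 := by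
        rw [← enorm_eq_nnnorm, ← ofReal_norm] at h2
        exact (ENNReal.ofReal_le_one.mp h2)
      exact h3
    have hhb : ∀ᵐ ω ∂μ, ‖h ω‖ ≤ 1 := by
      have := ae_le_eLpNormEssSup (f := h) (μ := μ)
      rw [eLpNorm_exponent_top] at hhtop
      filter_upwards [this] with ω hω
      have h2 : (‖h ω‖₊ : ℝ≥0∞) ≤ 1 := le_trans hω hhtop
      rw [← enorm_eq_nnnorm, ← ofReal_norm] at h2
      exact (ENNReal.ofReal_le_one.mp h2)
    -- on A, g = h = v a.e.
    have honA : ∀ᵐ ω ∂μ, ω ∈ A → g ω = h ω ∧ g ω = v ω := by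
      filter_upwards [hvA, hgb, hhb, heq] with ω h1 h2 h3 h4 hmem
      have habs : ‖v ω‖ = 1 := by rw [h1]; simp [Set.indicator, hmem]
      have hsum : g ω + h ω = 2 * v ω := by
        field_simp at h4; linear_combination -h4
      have habs2 : ‖g ω + h ω‖ = 2 := by
        rw [hsum, norm_mul, habs]; simp
      have hgh : g ω = h ω := midpoint_key h2 h3 habs2
      refine ⟨hgh, ?_⟩
      have : (2 : ℂ) * g ω = 2 * v ω := by rw [← hsum, hgh]; ring
      have h2ne : (2 : ℂ) ≠ 0 := by norm_num
      exact mul_left_cancel₀ h2ne this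
    -- off A, g = 0 and h = 0 a.e.
    have hoffA : ∀ f : Ω → ℂ, AEStronglyMeasurable f μ → eLpNorm f 1 μ ≤ 1 →
        (∀ᵐ ω ∂μ, ω ∈ A → f ω = v ω) → ∀ᵐ ω ∂μ, ω ∈ Aᶜ → f ω = 0 := by
      intro f hf hf1 hfA
      have hintA : ∫⁻ ω in A, (‖f ω‖₊ : ℝ≥0∞) ∂μ = 1 := by
        have h1 : ∀ᵐ ω ∂μ.restrict A, (‖f ω‖₊ : ℝ≥0∞) = 1 := by
          filter_upwards [ae_restrict_of_ae hfA, ae_restrict_of_ae hvnorm,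
            (ae_restrict_mem hA)] with ω h1 h2 h3
          rw [h1 h3] at *
          rw [h2]; simp [Set.indicator, h3]
        rw [lintegral_congr_ae h1]
        simp [hA1]
      have hsplit : ∫⁻ ω in A, (‖f ω‖₊ : ℝ≥0∞) ∂μ + ∫⁻ ω in Aᶜ, (‖f ω‖₊ : ℝ≥0∞) ∂μ
          = ∫⁻ ω, (‖f ω‖₊ : ℝ≥0∞) ∂μ := lintegral_add_compl _ hA
      have htot : ∫⁻ ω, (‖f ω‖₊ : ℝ≥0∞) ∂μ ≤ 1 := by
        simpa only [eLpNorm_one_eq_lintegral_enorm, enorm_eq_nnnorm] using hf1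
      have hzero : ∫⁻ ω in Aᶜ, (‖f ω‖₊ : ℝ≥0∞) ∂μ = 0 := by
        rw [hintA] at hsplit
        have hle : 1 + ∫⁻ ω in Aᶜ, (‖f ω‖₊ : ℝ≥0∞) ∂μ ≤ 1 + 0 := by
          rw [add_zero, hsplit]; exact htot
        exact le_antisymm ((ENNReal.add_le_add_iff_left one_ne_top).mp hle) zero_le
      have : ∀ᵐ ω ∂μ.restrict Aᶜ, (‖f ω‖₊ : ℝ≥0∞) = 0 :=
        (lintegral_eq_zero_iff' hf.enorm.restrict).mp hzero
      have : ∀ᵐ ω ∂μ.restrict Aᶜ, f ω = 0 := by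
        filter_upwards [this] with ω hω
        simpa using hω
      exact ae_imp_of_ae_restrict this
    have hgoff := hoffA g hg hg1 (by filter_upwards [honA] with ω hω hm; exact (hω hm).2)
    have hhoff := hoffA h hh hh1 (by
      filter_upwards [honA] with ω hω hm
      rw [← (hω hm).1]; exact (hω hm).2)
    filter_upwards [honA, hgoff, hhoff] with ω h1 h2 h3
    by_cases hmem : ω ∈ A
    · exact (h1 hmem).1
    · rw [h2 hmem, h3 hmem]
end
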